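/- arXiv:1207.7321 — 4 statements merged into one kernel-verified Lean document; each statement's English description precedes it below -/
import Mathlib

section
/- Let ε ∈ (0,1), let G_ε(α) = ε(1+α²) + 2(1-ε)[(1+α²)Φ(-α) - αφ(α)], and let α_* be a critical point of G_ε, i.e. 2α_*ε + 4(1-ε)[α_*Φ(-α_*) - φ(α_*)] = 0. Then G_ε(α_*) = ε + 2(1-ε)Φ(-α_*) = (1/2) G_ε''(α_*), and this value lies in (0,1). -/
open MeasureTheory

/-- Standard Gaussian density `φ(z) = e^{-z²/2}/√(2π)`. -/
noncomputable def gaussPdf (z : ℝ) : ℝ := Real.exp (-z ^ 2 / 2) / Real.sqrt (2 * Real.pi)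

/-- Standard Gaussian CDF `Φ(x) = ∫_{-∞}^x φ(z) dz`. -/
noncomputable def gaussCdf (x : ℝ) : ℝ := ∫ z in Set.Iic x, gaussPdf z

/-- `G_ε(α) = ε(1+α²) + 2(1-ε)[(1+α²)Φ(-α) - αφ(α)]`. -/
noncomputable def Gfun (ε α : ℝ) : ℝ :=
  ε * (1 + α ^ 2) + 2 * (1 - ε) * ((1 + α ^ 2) * gaussCdf (-α) - α * gaussPdf α)

section Aux

lemma gaussPdf_pos (z : ℝ) : 0 < gaussPdf z :=
  div_pos (Real.exp_pos _) (Real.sqrt_pos.2 (by positivity))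

lemma gaussPdf_eq (z : ℝ) : gaussPdf z = Real.exp (-(1/2) * z ^ 2) / Real.sqrt (2 * Real.pi) := by
  rw [gaussPdf]; ring_nf

lemma integrable_gaussPdf : Integrable gaussPdf := by
  have := (integrable_exp_neg_mul_sq (by norm_num : (0:ℝ) < 1/2)).div_const
    (Real.sqrt (2 * Real.pi))
  exact this.congr (by simp [funext gaussPdf_eq])

lemma integral_gaussPdf : ∫ z, gaussPdf z = 1 := by
  rw [funext gaussPdf_eq, integral_div, integral_gaussian,
    div_eq_one_iff_eq (by positivity)]
  norm_num
  rw [mul_comm]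

lemma gaussCdf_nonneg (x : ℝ) : 0 ≤ gaussCdf x :=
  setIntegral_nonneg measurableSet_Iic fun z _ => (gaussPdf_pos z).le

open Set in
lemma gaussCdf_lt {a b : ℝ} (h : a < b) : gaussCdf a < gaussCdf b := by
  have hd : gaussCdf b - gaussCdf a = ∫ x in a..b, gaussPdf x :=
    intervalIntegral.integral_Iic_sub_Iic integrable_gaussPdf.integrableOn
      integrable_gaussPdf.integrableOn
  have hpos : 0 < ∫ x in a..b, gaussPdf x :=
    intervalIntegral.intervalIntegral_pos_of_pos integrable_gaussPdf.intervalIntegrable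
      gaussPdf_pos h
  linarith

open Set in
lemma gaussCdf_zero : gaussCdf 0 = 1/2 := by
  have heven : ∀ z : ℝ, gaussPdf (-z) = gaussPdf z := by intro z; simp [gaussPdf]
  have h1 : gaussCdf 0 = ∫ z in Ioi (0:ℝ), gaussPdf z := by
    rw [gaussCdf, ← neg_zero, ← integral_comp_neg_Iic]
    simp [heven]
  have h2 : gaussCdf 0 + ∫ z in Ioi (0:ℝ), gaussPdf z = 1 := by
    rw [gaussCdf, intervalIntegral.integral_Iic_add_Ioi integrable_gaussPdf.integrableOn
      integrable_gaussPdf.integrableOn, integral_gaussPdf]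
  linarith

lemma gaussCdf_lt_half {x : ℝ} (h : x < 0) : gaussCdf x < 1/2 :=
  gaussCdf_zero ▸ gaussCdf_lt h

end Aux

/-- At a critical point `α_*` of `G_ε`, the value is
`G_ε(α_*) = ε + 2(1-ε)Φ(-α_*) = G_ε''(α_*)/2`, and this value lies in `(0,1)`. -/
theorem Gfun_min_value (ε αs : ℝ) (hε : ε ∈ Set.Ioo (0 : ℝ) 1)
    (hcrit : 2 * αs * ε + 4 * (1 - ε) * (αs * gaussCdf (-αs) - gaussPdf αs) = 0) :
    Gfun ε αs = ε + 2 * (1 - ε) * gaussCdf (-αs) ∧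
    Gfun ε αs = (2 * ε + 4 * (1 - ε) * gaussCdf (-αs)) / 2 ∧
    0 < Gfun ε αs ∧ Gfun ε αs < 1 := by
  obtain ⟨hε0, hε1⟩ := hε
  have hΦ := gaussCdf_nonneg (-αs)
  have hφ := gaussPdf_pos αs
  have h1 : Gfun ε αs = ε + 2 * (1 - ε) * gaussCdf (-αs) := by
    unfold Gfun; linear_combination (αs / 2) * hcrit
  have hαs : 0 < αs := by
    by_contra h; push_neg at h
    nlinarith [mul_nonneg (mul_nonneg (by linarith : (0:ℝ) ≤ 1-ε) hΦ) (neg_nonneg.2 h),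
      mul_nonneg (neg_nonneg.2 h) hε0.le]
  have hlt : gaussCdf (-αs) < 1/2 := gaussCdf_lt_half (by linarith)
  refine ⟨h1, by linarith, by nlinarith, by nlinarith⟩
end

section
/- Let A ∈ ℝ^{m×n}, x₀ ∈ ℝ^n, y = Ax₀, and suppose there exist a subgradient v ∈ ∂‖x₀‖₁ and z ∈ ℝ^m with v = Aᵀz (i.e., an exact dual certificate, w = 0), and suppose that for S = {i : |v_i| = 1} the matrix A restricted to S has full column rank (σ_min(A_S) > 0). Then x₀ is the unique minimizer of ‖x‖₁ subject to Ax = y. -/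
open Finset

/-- Exact dual certificate sufficiency for `ℓ₁` minimization: if there is a subgradient
`v ∈ ∂‖x₀‖₁` of the form `v = Aᵀz`, and the columns of `A` indexed by
`S = {i : |v i| = 1}` are linearly independent (full column rank of `A_S`), then `x₀`
is the unique minimizer of `‖x‖₁` subject to `Ax = Ax₀`. -/
theorem exact_dual_certificate_unique_l1_minimizer
    (m n : ℕ) (A : Matrix (Fin m) (Fin n) ℝ) (x₀ : Fin n → ℝ)
    (v : Fin n → ℝ) (z : Fin m → ℝ)
    (hv_sign : ∀ i, x₀ i ≠ 0 → v i = Real.sign (x₀ i))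
    (hv_bdd : ∀ i, |v i| ≤ 1)
    (hcert : v = A.transpose.mulVec z)
    (hrank : ∀ u : Fin n → ℝ, (∀ i, |v i| ≠ 1 → u i = 0) → A.mulVec u = 0 → u = 0) :
    ∀ x : Fin n → ℝ, A.mulVec x = A.mulVec x₀ → x ≠ x₀ →
      ∑ i, |x₀ i| < ∑ i, |x i| := by
  intro x hAx hne
  have hAh : A.mulVec (x - x₀) = 0 := by
    rw [Matrix.mulVec_sub, hAx, sub_self]
  have hdot : ∑ i, v i * (x i - x₀ i) = 0 := by
    have h1 : dotProduct v (x - x₀) = dotProduct z (A.mulVec (x - x₀)) := by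
      rw [Matrix.dotProduct_mulVec, hcert, Matrix.mulVec_transpose]
    rw [hAh, dotProduct_zero] at h1
    simpa [dotProduct, Pi.sub_apply] using h1
  have h0 : ∀ i, |x₀ i| = v i * x₀ i := by
    intro i
    by_cases hx : x₀ i = 0
    · simp [hx]
    · rw [hv_sign i hx]
      rcases lt_or_gt_of_ne hx with h | h
      · rw [Real.sign_of_neg h, abs_of_neg h]; ring
      · rw [Real.sign_of_pos h, abs_of_pos h]; ring
  have hle : ∀ i, v i * x i ≤ |x i| := by
    intro i
    calc v i * x i ≤ |v i * x i| := le_abs_self _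
      _ = |v i| * |x i| := abs_mul _ _
      _ ≤ 1 * |x i| := by gcongr; exact hv_bdd i
      _ = |x i| := one_mul _
  have hsum : ∑ i, |x₀ i| = ∑ i, v i * x i := by
    have : ∑ i, v i * x i - ∑ i, v i * x₀ i = 0 := by
      rw [← Finset.sum_sub_distrib]
      simpa [mul_sub] using hdot
    have h2 : ∑ i, v i * x i = ∑ i, v i * x₀ i := by linarith
    rw [h2]
    exact Finset.sum_congr rfl fun i _ => h0 i
  rw [hsum]
  apply Finset.sum_lt_sum (fun i _ => hle i)
  by_contra hcon
  push_neg at hcon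
  have heq : ∀ i, v i * x i = |x i| := by
    intro i
    exact le_antisymm (hle i) (hcon i (Finset.mem_univ i))
  have hsupp : ∀ i, |v i| ≠ 1 → (x - x₀) i = 0 := by
    intro i hvi
    have hvlt : |v i| < 1 := lt_of_le_of_ne (hv_bdd i) hvi
    have hx0 : x₀ i = 0 := by
      by_contra hx
      apply hvi
      rw [hv_sign i hx]
      rcases lt_or_gt_of_ne hx with h | h
      · rw [Real.sign_of_neg h]; simp
      · rw [Real.sign_of_pos h]; simp
    have hxi : x i = 0 := by
      by_contra hx
      have habs : (0:ℝ) < |x i| := abs_pos.mpr hx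
      have : v i * x i ≤ |v i| * |x i| := by
        calc v i * x i ≤ |v i * x i| := le_abs_self _
          _ = |v i| * |x i| := abs_mul _ _
      have hlt : |v i| * |x i| < 1 * |x i| := by
        exact mul_lt_mul_of_pos_right hvlt habs
      rw [one_mul] at hlt
      have := heq i
      linarith
    simp [Pi.sub_apply, hx0, hxi]
  have := hrank (x - x₀) hsupp hAh
  exact hne (by ext i; have := congrFun this i; simpa [sub_eq_zero] using this)
end

section
/- Let x̂ be a minimizer of ‖x‖₁ subject to Ax = y with y = Ax₀, let v ∈ ∂‖x₀‖₁, c ∈ (0,1), and define S(c) = {i : |v_i| ≥ 1-c} and its complement S̄(c). If the support of x₀ is contained in S(c), then c·‖x̂_{S̄(c)}‖₁ ≤ -⟨v, x̂ - x₀⟩ + ⟨Aᵀz, x̂ - x₀⟩ for any z ∈ ℝ^m; in particular, writing v = Aᵀz + w, one gets ‖x̂_{S̄(c)}‖₁ ≤ (1/c)‖w‖₂·‖x̂-x₀‖₂. -/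
open Finset

/-- Off-support `ℓ₁` mass bound for an `ℓ₁` minimizer: with `v ∈ ∂‖x₀‖₁`,
`S(c) = {i : |v i| ≥ 1-c}` containing the support of `x₀`, and `x̂` a minimizer of
`‖x‖₁` subject to `Ax = Ax₀`, one has, for any `z`,
`c‖x̂_{S̄(c)}‖₁ ≤ -⟨v, x̂-x₀⟩ + ⟨Aᵀz, x̂-x₀⟩`, and with `w = v - Aᵀz`,
`‖x̂_{S̄(c)}‖₁ ≤ (1/c)‖w‖₂‖x̂-x₀‖₂`. -/
theorem l1_minimizer_offsupport_bound
    (m n : ℕ) (A : Matrix (Fin m) (Fin n) ℝ) (x₀ xh : Fin n → ℝ)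
    (v : Fin n → ℝ) (c : ℝ) (hc : c ∈ Set.Ioo (0 : ℝ) 1)
    (hv_sign : ∀ i, x₀ i ≠ 0 → v i = Real.sign (x₀ i))
    (hv_bdd : ∀ i, |v i| ≤ 1)
    (hfeas : A.mulVec xh = A.mulVec x₀)
    (hopt : ∀ x : Fin n → ℝ, A.mulVec x = A.mulVec x₀ → ∑ i, |xh i| ≤ ∑ i, |x i|)
    (hsupp : ∀ i, x₀ i ≠ 0 → 1 - c ≤ |v i|) :
    (∀ z : Fin m → ℝ,
      c * ∑ i ∈ univ.filter (fun i => |v i| < 1 - c), |xh i|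
        ≤ -(∑ i, v i * (xh i - x₀ i)) + ∑ i, A.transpose.mulVec z i * (xh i - x₀ i)) ∧
    (∀ z : Fin m → ℝ,
      ∑ i ∈ univ.filter (fun i => |v i| < 1 - c), |xh i|
        ≤ (1 / c) * Real.sqrt (∑ i, (v i - A.transpose.mulVec z i) ^ 2)
            * Real.sqrt (∑ i, (xh i - x₀ i) ^ 2)) := by
  obtain ⟨hc0, hc1⟩ := hc
  -- the A^T z term vanishes
  have hAz : ∀ z : Fin m → ℝ,
      ∑ i, A.transpose.mulVec z i * (xh i - x₀ i) = 0 := by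
    intro z
    have hAd : ∀ j, ∑ i, A j i * (xh i - x₀ i) = 0 := by
      intro j
      have h1 := congrFun hfeas j
      simp only [Matrix.mulVec, dotProduct] at h1
      simp [mul_sub, Finset.sum_sub_distrib, h1]
    calc ∑ i, A.transpose.mulVec z i * (xh i - x₀ i)
        = ∑ i, ∑ j, z j * (A j i * (xh i - x₀ i)) := by
          refine Finset.sum_congr rfl fun i _ => ?_
          simp only [Matrix.mulVec, dotProduct, Matrix.transpose_apply,
            Finset.sum_mul]
          refine Finset.sum_congr rfl fun j _ => by ring
      _ = ∑ j, z j * ∑ i, A j i * (xh i - x₀ i) := by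
          rw [Finset.sum_comm]
          simp [Finset.mul_sum]
      _ = 0 := by simp [hAd]
  -- pointwise inequality
  have hpt : ∀ i, v i * (xh i - x₀ i)
      + (if |v i| < 1 - c then c * |xh i| else 0) ≤ |xh i| - |x₀ i| := by
    intro i
    have hvx : v i * xh i ≤ |xh i| := by
      calc v i * xh i ≤ |v i * xh i| := le_abs_self _
        _ = |v i| * |xh i| := abs_mul _ _
        _ ≤ 1 * |xh i| := by
            exact mul_le_mul_of_nonneg_right (hv_bdd i) (abs_nonneg _)
        _ = |xh i| := one_mul _
    by_cases hS : |v i| < 1 - c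
    · have hx0 : x₀ i = 0 := by
        by_contra h
        exact absurd (hsupp i h) (not_le.2 hS)
      simp only [hS, if_true, hx0, sub_zero, abs_zero]
      have : v i * xh i ≤ (1 - c) * |xh i| := by
        calc v i * xh i ≤ |v i * xh i| := le_abs_self _
          _ = |v i| * |xh i| := abs_mul _ _
          _ ≤ (1 - c) * |xh i| :=
            mul_le_mul_of_nonneg_right hS.le (abs_nonneg _)
      linarith
    · simp only [hS, if_false, add_zero]
      by_cases hx0 : x₀ i = 0
      · simp [hx0]; linarith
      · have hsign := hv_sign i hx0
        have hvx0 : v i * x₀ i = |x₀ i| := by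
          rcases lt_or_gt_of_ne hx0 with h | h
          · rw [hsign, Real.sign_of_neg h, abs_of_neg h]; ring
          · rw [hsign, Real.sign_of_pos h, abs_of_pos h]; ring
        have := mul_sub (v i) (xh i) (x₀ i)
        nlinarith
  -- key summed inequality
  have hkey : c * ∑ i ∈ univ.filter (fun i => |v i| < 1 - c), |xh i|
      ≤ -(∑ i, v i * (xh i - x₀ i)) := by
    have hsum := Finset.sum_le_sum (fun i (_ : i ∈ Finset.univ) => hpt i)
    rw [Finset.sum_add_distrib, Finset.sum_sub_distrib] at hsum
    have hfilt : ∑ i, (if |v i| < 1 - c then c * |xh i| else 0)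
        = c * ∑ i ∈ univ.filter (fun i => |v i| < 1 - c), |xh i| := by
      rw [Finset.mul_sum, Finset.sum_filter]
    rw [hfilt] at hsum
    have hop := hopt x₀ rfl
    linarith
  constructor
  · intro z
    rw [hAz z]
    linarith
  · intro z
    have h1 : c * ∑ i ∈ univ.filter (fun i => |v i| < 1 - c), |xh i|
        ≤ ∑ i, (A.transpose.mulVec z i - v i) * (xh i - x₀ i) := by
      have : ∑ i, (A.transpose.mulVec z i - v i) * (xh i - x₀ i)
          = -(∑ i, v i * (xh i - x₀ i))
            + ∑ i, A.transpose.mulVec z i * (xh i - x₀ i) := by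
        rw [← Finset.sum_neg_distrib, ← Finset.sum_add_distrib]
        refine Finset.sum_congr rfl fun i _ => by ring
      rw [this, hAz z]
      linarith
    have hCS := Real.sum_mul_le_sqrt_mul_sqrt Finset.univ
      (fun i => A.transpose.mulVec z i - v i) (fun i => xh i - x₀ i)
    have hsq : ∑ i, (A.transpose.mulVec z i - v i) ^ 2
        = ∑ i, (v i - A.transpose.mulVec z i) ^ 2 := by
      refine Finset.sum_congr rfl fun i _ => by ring
    rw [hsq] at hCS
    have hle : c * ∑ i ∈ univ.filter (fun i => |v i| < 1 - c), |xh i|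
        ≤ Real.sqrt (∑ i, (v i - A.transpose.mulVec z i) ^ 2)
            * Real.sqrt (∑ i, (xh i - x₀ i) ^ 2) := le_trans h1 hCS
    rw [div_mul_eq_mul_div, div_mul_eq_mul_div, one_mul, le_div_iff₀ hc0]
    linarith
end

section
/- Let r ∈ ℝ^n and let S̄ ⊆ [n] be partitioned into blocks S₁, …, S_K with nc/2 ≤ |S_ℓ| ≤ nc, ordered so that every coordinate of r in S_ℓ has absolute value at most every coordinate of r in S_{ℓ-1}. Then the tail blocks S̄₊ = S₂ ∪ … ∪ S_K satisfy ‖r_{S̄₊}‖₂² ≤ (4/(nc)) ‖r_{S̄}‖₁². -/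
open Finset

/-- Block decomposition bound: if `S̄` is partitioned into blocks `S 0, …, S (K-1)` of
sizes between `nc/2` and `nc`, ordered so that the absolute values of coordinates of `r`
are non-increasing from one block to the next, then the tail blocks `S̄₊ = S 1 ∪ … ∪ S (K-1)`
satisfy `‖r_{S̄₊}‖₂² ≤ (4/(nc)) ‖r_{S̄}‖₁²`. -/
theorem tail_blocks_l2_bound
    (n K : ℕ) (c : ℝ) (hc : 0 < c) (r : Fin n → ℝ) (S : Fin K → Finset (Fin n))
    (hdisj : ∀ ℓ ℓ' : Fin K, ℓ ≠ ℓ' → Disjoint (S ℓ) (S ℓ'))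
    (hsize : ∀ ℓ : Fin K, (n : ℝ) * c / 2 ≤ ((S ℓ).card : ℝ) ∧ ((S ℓ).card : ℝ) ≤ (n : ℝ) * c)
    (horder : ∀ ℓ ℓ' : Fin K, (ℓ' : ℕ) + 1 = (ℓ : ℕ) →
      ∀ i ∈ S ℓ, ∀ j ∈ S ℓ', |r i| ≤ |r j|) :
    ∑ ℓ ∈ univ.filter (fun ℓ : Fin K => 1 ≤ (ℓ : ℕ)), ∑ i ∈ S ℓ, (r i) ^ 2
      ≤ (4 / ((n : ℝ) * c)) * (∑ ℓ : Fin K, ∑ i ∈ S ℓ, |r i|) ^ 2 := by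
  rcases Nat.eq_zero_or_pos n with hn | hn
  · subst hn
    have hS : ∀ ℓ, S ℓ = ∅ := fun ℓ => Finset.eq_empty_of_isEmpty _
    simp [hS]
  · have hnc0 : 0 < (n : ℝ) * c := by positivity
    set A : Fin K → ℝ := fun ℓ => ∑ i ∈ S ℓ, |r i| with hA
    have hA0 : ∀ ℓ, 0 ≤ A ℓ := fun ℓ => Finset.sum_nonneg fun i _ => abs_nonneg _
    have hcard : ∀ ℓ : Fin K, 0 < ((S ℓ).card : ℝ) := fun ℓ =>
      lt_of_lt_of_le (by positivity) (hsize ℓ).1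
    -- predecessor map
    set p : Fin K → Fin K := fun ℓ => ⟨(ℓ : ℕ) - 1, lt_of_le_of_lt (Nat.sub_le _ _) ℓ.2⟩
      with hp
    -- per-block bound
    have key : ∀ ℓ : Fin K, 1 ≤ (ℓ : ℕ) →
        ∑ i ∈ S ℓ, (r i) ^ 2 ≤ 4 / ((n : ℝ) * c) * (A (p ℓ)) ^ 2 := by
      intro ℓ hℓ
      have hpℓ : ((p ℓ : Fin K) : ℕ) + 1 = (ℓ : ℕ) := by
        simp only [hp]
        omega
      have hbound : ∀ i ∈ S ℓ, |r i| ≤ A (p ℓ) / ((S (p ℓ)).card : ℝ) := by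
        intro i hi
        rw [le_div_iff₀ (hcard (p ℓ))]
        calc |r i| * ((S (p ℓ)).card : ℝ) = ∑ _j ∈ S (p ℓ), |r i| := by
              rw [Finset.sum_const, nsmul_eq_mul, mul_comm]
          _ ≤ ∑ j ∈ S (p ℓ), |r j| :=
              Finset.sum_le_sum fun j hj => horder ℓ (p ℓ) hpℓ i hi j hj
      have h1 : ∑ i ∈ S ℓ, (r i) ^ 2
          ≤ ((S ℓ).card : ℝ) * (A (p ℓ) / ((S (p ℓ)).card : ℝ)) ^ 2 := by
        calc ∑ i ∈ S ℓ, (r i) ^ 2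
            ≤ ∑ _i ∈ S ℓ, (A (p ℓ) / ((S (p ℓ)).card : ℝ)) ^ 2 := by
              refine Finset.sum_le_sum fun i hi => ?_
              rw [← sq_abs (r i)]
              exact pow_le_pow_left₀ (abs_nonneg _) (hbound i hi) 2
          _ = ((S ℓ).card : ℝ) * (A (p ℓ) / ((S (p ℓ)).card : ℝ)) ^ 2 := by
              rw [Finset.sum_const, nsmul_eq_mul]
      refine h1.trans ?_
      have h2 : (A (p ℓ) / ((S (p ℓ)).card : ℝ)) ^ 2
          ≤ (A (p ℓ) / ((n : ℝ) * c / 2)) ^ 2 := by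
        apply pow_le_pow_left₀ (by positivity)
        exact div_le_div_of_nonneg_left (hA0 _) (by positivity) (hsize (p ℓ)).1
      calc ((S ℓ).card : ℝ) * (A (p ℓ) / ((S (p ℓ)).card : ℝ)) ^ 2
          ≤ ((n : ℝ) * c) * (A (p ℓ) / ((n : ℝ) * c / 2)) ^ 2 :=
            mul_le_mul (hsize ℓ).2 h2 (by positivity) (le_of_lt hnc0)
        _ = 4 / ((n : ℝ) * c) * (A (p ℓ)) ^ 2 := by
            field_simp
            ring
    -- sum over tail blocks
    calc ∑ ℓ ∈ univ.filter (fun ℓ : Fin K => 1 ≤ (ℓ : ℕ)), ∑ i ∈ S ℓ, (r i) ^ 2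
        ≤ ∑ ℓ ∈ univ.filter (fun ℓ : Fin K => 1 ≤ (ℓ : ℕ)),
            4 / ((n : ℝ) * c) * (A (p ℓ)) ^ 2 := by
          refine Finset.sum_le_sum fun ℓ hℓ => key ℓ ?_
          simpa using hℓ
      _ = 4 / ((n : ℝ) * c) * ∑ ℓ ∈ univ.filter (fun ℓ : Fin K => 1 ≤ (ℓ : ℕ)),
            (A (p ℓ)) ^ 2 := by rw [Finset.mul_sum]
      _ ≤ 4 / ((n : ℝ) * c) * ∑ ℓ : Fin K, (A ℓ) ^ 2 := by
          apply mul_le_mul_of_nonneg_left _ (by positivity)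
          have hinj : Set.InjOn p (univ.filter (fun ℓ : Fin K => 1 ≤ (ℓ : ℕ))) := by
            intro a ha b hb hab
            simp only [Finset.coe_filter, Set.mem_setOf_eq, Finset.mem_univ, true_and] at ha hb
            have : (a : ℕ) - 1 = (b : ℕ) - 1 := congrArg Fin.val hab
            have : (a : ℕ) = (b : ℕ) := by omega
            exact Fin.ext this
          have himg := Finset.sum_image (f := fun m : Fin K => (A m) ^ 2)
            (g := p) (s := univ.filter (fun ℓ : Fin K => 1 ≤ (ℓ : ℕ)))
            (fun a ha b hb h => hinj ha hb h)
          rw [← himg]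
          exact Finset.sum_le_sum_of_subset_of_nonneg (Finset.subset_univ _)
            (fun m _ _ => by positivity)
      _ ≤ 4 / ((n : ℝ) * c) * (∑ ℓ : Fin K, A ℓ) ^ 2 := by
          apply mul_le_mul_of_nonneg_left _ (by positivity)
          have hT : ∀ ℓ : Fin K, A ℓ ≤ ∑ m : Fin K, A m := fun ℓ =>
            Finset.single_le_sum (fun m _ => hA0 m) (Finset.mem_univ ℓ)
          calc ∑ ℓ : Fin K, (A ℓ) ^ 2 ≤ ∑ ℓ : Fin K, A ℓ * (∑ m : Fin K, A m) := by
                refine Finset.sum_le_sum fun ℓ _ => ?_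
                rw [sq]
                exact mul_le_mul_of_nonneg_left (hT ℓ) (hA0 ℓ)
            _ = (∑ ℓ : Fin K, A ℓ) ^ 2 := by rw [← Finset.sum_mul, sq]
end
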